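/- arXiv:1801.09168 — 3 statements merged into one kernel-verified Lean document; each statement's English description precedes it below -/
import Mathlib

section
/- If a finite-dimensional Λ-module M has a filtration governed by a semisimple sequence S' = (S'_0,...,S'_L), then S' ≤ S(M) in the dominance order, where S(M) is the radical layering of M. -/
/-
Since the filtration is governed, `J^l M ⊆ F_l` for every `l` (induction on `l`). For an
idempotent `e`, `N ↦ dim_K (e N)` is additive on short exact sequences (if `P ⊆ N` then
`e N ∩ P = e P`), so along any descending chain the layers telescope:
`∑_{j ≤ l} dim e(F_j / F_{j+1}) = dim eM - dim eF_{l+1}`. Hence the partial sums for `S'` are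
`dim eM - dim eF_{l+1} ≤ dim eM - dim e(J^{l+1} M)`, the partial sums for the radical layering.
-/

section AlgFramework

variable (K Λ : Type*) [Field K] [Ring Λ] [Algebra K Λ]

/-- The quotient of the submodule `p` by (its intersection with) the submodule `q`. -/
abbrev subQuot (R M : Type*) [Ring R] [AddCommGroup M] [Module R M]
    (p q : Submodule R M) : Type _ :=
  ↥p ⧸ Submodule.comap p.subtype q

/-- Scalar multiplication by `a : Λ`, as a `K`-linear endomap. -/
def eComp (a : Λ) (N : Type*) [AddCommGroup N] [Module K N] [Module Λ N]
    [IsScalarTower K Λ N] : N →ₗ[K] N where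
  toFun m := a • m
  map_add' := smul_add a
  map_smul' k m := smul_comm a k m

/-- `dimAt a N = dim_K (a • N)`; for an idempotent `a = e_i` this is the `i`-th entry of the
dimension vector of `N`. -/
noncomputable def dimAt (a : Λ) (N : Type*) [AddCommGroup N] [Module K N] [Module Λ N]
    [IsScalarTower K Λ N] : ℕ :=
  Module.finrank K ↥(LinearMap.range (eComp K Λ a N))

/-- `J • N`, for an ideal `J` and a submodule `N` of a `Λ`-module `M`. -/
def smulSub (J : Ideal Λ) {M : Type*} [AddCommGroup M] [Module Λ M] (N : Submodule Λ M) :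
    Submodule Λ M :=
  Submodule.span Λ {m : M | ∃ a ∈ J, ∃ x ∈ N, m = a • x}

/-- The radical series `radM J M l = J^l M` of the module `M`. -/
def radM (J : Ideal Λ) (M : Type*) [AddCommGroup M] [Module Λ M] : ℕ → Submodule Λ M
  | 0 => ⊤
  | l + 1 => smulSub Λ J (radM J M l)

end AlgFramework

section DimAt

variable {K Λ : Type*} [Field K] [Ring Λ] [Algebra K Λ]
  {N N' : Type*} [AddCommGroup N] [Module Λ N] [Module K N] [IsScalarTower K Λ N]
  [AddCommGroup N'] [Module Λ N'] [Module K N'] [IsScalarTower K Λ N']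

instance Submodule.finiteDimensional_of_tower [FiniteDimensional K N] (P : Submodule Λ N) :
    FiniteDimensional K P :=
  .of_injective (P.subtype.restrictScalars K) P.injective_subtype

lemma restrictScalars_comp_eComp (a : Λ) (g : N →ₗ[Λ] N') :
    g.restrictScalars K ∘ₗ eComp K Λ a N = eComp K Λ a N' ∘ₗ g.restrictScalars K :=
  LinearMap.ext fun x => g.map_smul a x

lemma map_range_eComp (a : Λ) (g : N →ₗ[Λ] N') :
    (LinearMap.range (eComp K Λ a N)).map (g.restrictScalars K) =
      (LinearMap.range (g.restrictScalars K)).map (eComp K Λ a N') := by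
  rw [← LinearMap.range_comp, restrictScalars_comp_eComp, LinearMap.range_comp]

lemma map_range_eComp_of_surjective (a : Λ) {g : N →ₗ[Λ] N'} (hg : Function.Surjective g) :
    (LinearMap.range (eComp K Λ a N)).map (g.restrictScalars K) =
      LinearMap.range (eComp K Λ a N') := by
  rw [map_range_eComp, LinearMap.range_eq_top.mpr (show Function.Surjective (g.restrictScalars K)
    from hg), Submodule.map_top]

lemma dimAt_eq_of_linearEquiv (a : Λ) (g : N ≃ₗ[Λ] N') : dimAt K Λ a N = dimAt K Λ a N' := by
  rw [dimAt, dimAt, ← map_range_eComp_of_surjective a g.surjective]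
  exact (LinearEquiv.finrank_map_eq (g.restrictScalars K) _).symm

lemma dimAt_le_of_injective [FiniteDimensional K N'] (a : Λ) {g : N →ₗ[Λ] N'}
    (hg : Function.Injective g) : dimAt K Λ a N ≤ dimAt K Λ a N' := by
  rw [dimAt, (Submodule.equivMapOfInjective (g.restrictScalars K) hg _).finrank_eq,
    map_range_eComp]
  exact Submodule.finrank_mono LinearMap.map_le_range

lemma map_restrictScalars_eComp {a : Λ} (ha : IsIdempotentElem a) (P : Submodule Λ N) :
    (P.restrictScalars K).map (eComp K Λ a N) =
      LinearMap.range (eComp K Λ a N) ⊓ P.restrictScalars K := by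
  ext x
  constructor
  · rintro ⟨p, hp, rfl⟩
    exact ⟨⟨p, rfl⟩, P.smul_mem a hp⟩
  · rintro ⟨⟨n, rfl⟩, hx⟩
    exact ⟨a • n, hx, by simp [eComp, smul_smul, ha.eq]⟩

lemma dimAt_submodule_eq_finrank_inf {a : Λ} (ha : IsIdempotentElem a) (P : Submodule Λ N) :
    dimAt K Λ a P =
      Module.finrank K ↥(LinearMap.range (eComp K Λ a N) ⊓ P.restrictScalars K) := by
  rw [dimAt, ← map_restrictScalars_eComp ha,
    (Submodule.equivMapOfInjective (P.subtype.restrictScalars K) P.injective_subtype _).finrank_eq,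
    map_range_eComp, LinearMap.range_restrictScalars, Submodule.range_subtype]

lemma dimAt_add_dimAt_quotient [FiniteDimensional K N] {a : Λ} (ha : IsIdempotentElem a)
    (P : Submodule Λ N) : dimAt K Λ a P + dimAt K Λ a (N ⧸ P) = dimAt K Λ a N := by
  set V := LinearMap.range (eComp K Λ a N)
  set π := P.mkQ.restrictScalars K
  have hrange : LinearMap.range (π.domRestrict V) = LinearMap.range (eComp K Λ a (N ⧸ P)) := by
    rw [LinearMap.range_domRestrict]
    exact map_range_eComp_of_surjective a P.mkQ_surjective
  have hker : Module.finrank K (LinearMap.ker (π.domRestrict V)) = dimAt K Λ a P := by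
    have hπ : LinearMap.ker π = P.restrictScalars K := by
      rw [LinearMap.ker_restrictScalars, Submodule.ker_mkQ]
    rw [dimAt_submodule_eq_finrank_inf ha, LinearMap.ker_domRestrict, hπ,
      ← Submodule.map_comap_subtype, Submodule.finrank_map_subtype_eq]
  rw [← hker, dimAt, ← hrange, add_comm]
  exact (π.domRestrict V).finrank_range_add_finrank_ker

end DimAt

lemma Fin.sum_Iic_eq_sum_range {β : Type*} [AddCommMonoid β] {n : ℕ} (l : Fin n) (g : ℕ → β) :
    ∑ j ∈ Finset.Iic l, g j = ∑ j ∈ Finset.range (l + 1), g j := by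
  rw [Nat.range_succ_eq_Iic, ← Fin.map_valEmbedding_Iic, Finset.sum_map]
  rfl

lemma Fin.clamp_val_eq_castSucc {m : ℕ} (j : Fin m) : Fin.clamp j m = j.castSucc :=
  Fin.ext (by simp [Fin.clamp, j.isLt.le])

lemma Fin.clamp_val_add_one_eq_succ {m : ℕ} (j : Fin m) : Fin.clamp (j + 1) m = j.succ :=
  Fin.ext (by simp [Fin.clamp, Nat.succ_le_of_lt j.isLt])

section Chains

variable {Λ : Type*} [Ring Λ] {M : Type*} [AddCommGroup M] [Module Λ M]

lemma smulSub_mono (J : Ideal Λ) {A B : Submodule Λ M} (h : A ≤ B) :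
    smulSub Λ J A ≤ smulSub Λ J B :=
  Submodule.span_mono fun _ ⟨b, hb, x, hx, hm⟩ => ⟨b, hb, x, h hx, hm⟩

lemma smulSub_le (J : Ideal Λ) (A : Submodule Λ M) : smulSub Λ J A ≤ A :=
  Submodule.span_le.mpr fun _ ⟨b, _, _, hx, hm⟩ => hm ▸ A.smul_mem b hx

lemma radM_antitone (J : Ideal Λ) : Antitone (radM Λ J M) :=
  antitone_nat_of_succ_le fun n => smulSub_le J (radM Λ J M n)

lemma radM_le_of_smulSub_le (J : Ideal Λ) {G : ℕ → Submodule Λ M} (h0 : G 0 = ⊤) {N : ℕ}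
    (hG : ∀ n < N, smulSub Λ J (G n) ≤ G (n + 1)) : ∀ n ≤ N, radM Λ J M n ≤ G n := by
  intro n hn
  induction n with
  | zero => exact h0 ▸ le_top
  | succ n ih => exact (smulSub_mono J (ih (by omega))).trans (hG n hn)

variable (K : Type*) [Field K] [Algebra K Λ] [Module K M] [IsScalarTower K Λ M]

noncomputable def layerDim (a : Λ) (G : ℕ → Submodule Λ M) (n : ℕ) : ℕ :=
  dimAt K Λ a (subQuot Λ M (G n) (G (n + 1)))

lemma layerDim_eq_of_eq (a : Λ) {G : ℕ → Submodule Λ M} {n : ℕ} {A C : Submodule Λ M}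
    (hA : G n = A) (hC : G (n + 1) = C) :
    layerDim K a G n = dimAt K Λ a (subQuot Λ M A C) := by
  subst hA hC
  rfl

variable [FiniteDimensional K M] {a : Λ}

lemma dimAt_subQuot_add_dimAt (ha : IsIdempotentElem a) {A C : Submodule Λ M} (h : C ≤ A) :
    dimAt K Λ a (subQuot Λ M A C) + dimAt K Λ a C = dimAt K Λ a A := by
  rw [← dimAt_add_dimAt_quotient ha (Submodule.comap A.subtype C), add_comm,
    dimAt_eq_of_linearEquiv a (Submodule.comapSubtypeEquivOfLe h)]

lemma sum_layerDim_add_dimAt (ha : IsIdempotentElem a) {G : ℕ → Submodule Λ M}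
    (hG : Antitone G) (n : ℕ) :
    ∑ j ∈ Finset.range n, layerDim K a G j + dimAt K Λ a (G n) = dimAt K Λ a (G 0) := by
  induction n with
  | zero => simp
  | succ n ih =>
    rw [Finset.sum_range_succ, add_assoc, layerDim, dimAt_subQuot_add_dimAt K ha (hG n.le_succ),
      ih]

lemma sum_layerDim_le_of_le (ha : IsIdempotentElem a) {G H : ℕ → Submodule Λ M}
    (hG : Antitone G) (hH : Antitone H) (h0 : G 0 = H 0) {n : ℕ} (hn : H n ≤ G n) :
    ∑ j ∈ Finset.range n, layerDim K a G j ≤ ∑ j ∈ Finset.range n, layerDim K a H j := by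
  have hGsum := sum_layerDim_add_dimAt K ha hG n
  have hHsum := sum_layerDim_add_dimAt K ha hH n
  have hle := dimAt_le_of_injective (K := K) a (Submodule.inclusion_injective hn)
  rw [h0] at hGsum
  omega

end Chains

theorem governed_filtration_dominance_general
    (K Λ : Type*) [Field K] [Ring Λ] [Algebra K Λ]
    (L : ℕ) (J : Ideal Λ)
    (nn : ℕ) (e : Fin nn → Λ) (hidem : ∀ i, IsIdempotentElem (e i))
    (M : Type*) [AddCommGroup M] [Module Λ M] [Module K M] [IsScalarTower K Λ M]
    [FiniteDimensional K M]
    (S' : Fin (L + 1) → Type*) [∀ l, AddCommGroup (S' l)] [∀ l, Module Λ (S' l)]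
    [∀ l, Module K (S' l)] [∀ l, IsScalarTower K Λ (S' l)]
    (F : Fin (L + 2) → Submodule Λ M)
    (hF0 : F 0 = ⊤)
    (hmono : ∀ l : Fin (L + 1), F l.succ ≤ F l.castSucc)
    (hgov : ∀ l : Fin (L + 1), smulSub Λ J (F l.castSucc) ≤ F l.succ)
    (hiso : ∀ l : Fin (L + 1),
      Nonempty (subQuot Λ M (F l.castSucc) (F l.succ) ≃ₗ[Λ] S' l)) :
    ∀ (l : Fin (L + 1)) (i : Fin nn),
      ∑ j ∈ Finset.Iic l, dimAt K Λ (e i) (S' j) ≤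
        ∑ j ∈ Finset.Iic l,
          dimAt K Λ (e i) (subQuot Λ M (radM Λ J M (j : ℕ)) (radM Λ J M ((j : ℕ) + 1))) := by
  intro l i
  set G : ℕ → Submodule Λ M := fun n => F (Fin.clamp n (L + 1))
  have hG : Antitone G := (Fin.antitone_iff_succ_le.mpr hmono).comp_monotone Fin.clamp_monotone
  have hG_castSucc (j : Fin (L + 1)) : G j = F j.castSucc :=
    congrArg F (Fin.clamp_val_eq_castSucc j)
  have hG_succ (j : Fin (L + 1)) : G (j + 1) = F j.succ :=
    congrArg F (Fin.clamp_val_add_one_eq_succ j)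
  have hrad : radM Λ J M (l + 1) ≤ G (l + 1) := by
    refine radM_le_of_smulSub_le J hF0 (N := L + 1) (fun n hn => ?_) _ (by omega)
    simpa only [hG_castSucc ⟨n, hn⟩, hG_succ ⟨n, hn⟩] using hgov ⟨n, hn⟩
  have hS' (j : Fin (L + 1)) : dimAt K Λ (e i) (S' j) = layerDim K (e i) G j :=
    (layerDim_eq_of_eq K _ (hG_castSucc j) (hG_succ j) |>.trans
      (dimAt_eq_of_linearEquiv _ (hiso j).some)).symm
  calc ∑ j ∈ Finset.Iic l, dimAt K Λ (e i) (S' j)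
      = ∑ j ∈ Finset.Iic l, layerDim K (e i) G j := Finset.sum_congr rfl fun j _ => hS' j
    _ ≤ ∑ j ∈ Finset.Iic l, layerDim K (e i) (radM Λ J M) j := by
      rw [Fin.sum_Iic_eq_sum_range, Fin.sum_Iic_eq_sum_range]
      exact sum_layerDim_le_of_le K (hidem i) hG (radM_antitone J) hF0 hrad

/-- If a finite-dimensional `Λ`-module `M` has a filtration governed by a
semisimple sequence `S' = (S'_0, …, S'_L)`, then `S' ≤ S(M)` in the dominance order, where
`S(M)` is the radical layering of `M`.  Dimension vectors are recorded at a family of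
idempotents `e i` of `Λ`: the dominance order compares, componentwise at each `e i`, the
`K`-dimensions of the partial direct sums `⊕_{j ≤ l} S'_j` resp. `⊕_{j ≤ l} J^j M / J^(j+1) M`. -/
theorem governed_filtration_dominance
    (K Λ : Type*) [Field K] [Ring Λ] [Algebra K Λ] [FiniteDimensional K Λ]
    (L : ℕ) (J : Ideal Λ)
    (hJac : J = sInf {P : Ideal Λ | P.IsMaximal})
    (hnil : radM Λ J Λ (L + 1) = ⊥)
    (nn : ℕ) (e : Fin nn → Λ) (hidem : ∀ i, IsIdempotentElem (e i))
    (M : Type*) [AddCommGroup M] [Module Λ M] [Module K M] [IsScalarTower K Λ M]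
    [FiniteDimensional K M]
    (S' : Fin (L + 1) → Type*) [∀ l, AddCommGroup (S' l)] [∀ l, Module Λ (S' l)]
    [∀ l, Module K (S' l)] [∀ l, IsScalarTower K Λ (S' l)] [∀ l, FiniteDimensional K (S' l)]
    [∀ l, IsSemisimpleModule Λ (S' l)]
    (F : Fin (L + 2) → Submodule Λ M)
    (hF0 : F 0 = ⊤) (hFlast : F (Fin.last (L + 1)) = ⊥)
    (hmono : ∀ l : Fin (L + 1), F l.succ ≤ F l.castSucc)
    (hgov : ∀ l : Fin (L + 1), smulSub Λ J (F l.castSucc) ≤ F l.succ)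
    (hiso : ∀ l : Fin (L + 1),
      Nonempty (subQuot Λ M (F l.castSucc) (F l.succ) ≃ₗ[Λ] S' l)) :
    ∀ (l : Fin (L + 1)) (i : Fin nn),
      ∑ j ∈ Finset.Iic l, dimAt K Λ (e i) (S' j) ≤
        ∑ j ∈ Finset.Iic l,
          dimAt K Λ (e i) (subQuot Λ M (radM Λ J M (j : ℕ)) (radM Λ J M ((j : ℕ) + 1))) :=
  governed_filtration_dominance_general K Λ L J nn e hidem M S' F hF0 hmono hgov hiso
end

section
/- A Λ-module M (with dimension vector d) lies in the GL(d)-stable hull of the triangular variety Rep^{tri}(≥S) if and only if M admits a filtration governed by S. Equivalently: there exists a basis of K^d adapted to a decomposition induced by S in which all structure maps f_α have the prescribed strictly lower-triangular block form iff M has an S-governed filtration. -/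
open Matrix

section Framework

variable {K : Type*} [Field K] {n : ℕ}

/-- Paths in a quiver on vertices `Fin n` with `B i j` arrows from `i` to `j`. -/
inductive QPath (B : Fin n → Fin n → ℕ) : Fin n → Fin n → Type
  | nil (i : Fin n) : QPath B i i
  | cons {i j k : Fin n} (p : QPath B i j) (a : Fin (B j k)) : QPath B i k

/-- Length of a path. -/
def QPath.length {B : Fin n → Fin n → ℕ} : ∀ {i j : Fin n}, QPath B i j → ℕ
  | _, _, .nil _ => 0
  | _, _, .cons p _ => p.length + 1

variable (K n) in
/-- A point of the representation space with dimension vector `d`. -/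
abbrev RepPt (B : Fin n → Fin n → ℕ) (d : Fin n → ℕ) : Type _ :=
  ∀ i j : Fin n, Fin (B i j) → Matrix (Fin (d j)) (Fin (d i)) K

variable {B : Fin n → Fin n → ℕ} {d : Fin n → ℕ}

/-- The matrix by which a path acts under a representation point. -/
def evalPath (x : RepPt K n B d) : ∀ {i j : Fin n}, QPath B i j → Matrix (Fin (d j)) (Fin (d i)) K
  | _, _, .nil _ => 1
  | _, _, .cons p a => x _ _ a * evalPath x p

/-- Membership in the representation variety of the truncated path algebra of Loewy length
`L+1`: all paths of length `L+1` act by zero. -/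
def InRepTrunc (L : ℕ) (x : RepPt K n B d) : Prop :=
  ∀ (i j : Fin n) (p : QPath B i j), QPath.length p = L + 1 → evalPath x p = 0

/-- Evaluation of a formal `K`-linear combination of parallel paths. -/
noncomputable def evalRel (x : RepPt K n B d) {i j : Fin n} (r : QPath B i j →₀ K) :
    Matrix (Fin (d j)) (Fin (d i)) K :=
  r.sum fun p c => c • evalPath x p

/-- Membership in the representation variety of `KQ/I`, for a family `I` of relations. -/
def InRep (I : ∀ i j : Fin n, Set (QPath B i j →₀ K)) (x : RepPt K n B d) : Prop :=
  ∀ i j : Fin n, ∀ r ∈ I i j, evalRel x r = 0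

/-- The radical series of a subrepresentation `W` (for `W = ⊤`, of the module `M_x`):
`radSerIn x W (l+1)` is spanned by the images of `radSerIn x W l` under the arrows. -/
def radSerIn (x : RepPt K n B d) (W : ∀ i : Fin n, Submodule K (Fin (d i) → K)) :
    ℕ → ∀ i : Fin n, Submodule K (Fin (d i) → K)
  | 0 => W
  | l + 1 => fun j =>
      ⨆ (i : Fin n) (a : Fin (B i j)),
        Submodule.map (Matrix.mulVecLin (x i j a)) (radSerIn x W l i)

/-- The module carried by the subrepresentation `W` of `M_x` has a filtration governed by the
semisimple sequence `S` (semisimple sequences are recorded by their dimension vectors). -/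
def GovernedFiltOn (L : ℕ) (x : RepPt K n B d) (W : ∀ i : Fin n, Submodule K (Fin (d i) → K))
    (S : Fin (L + 1) → Fin n → ℕ) : Prop :=
  ∃ F : Fin (L + 2) → ∀ i : Fin n, Submodule K (Fin (d i) → K),
    (∀ i, F 0 i = W i) ∧ (∀ i, F (Fin.last (L + 1)) i = ⊥) ∧
    (∀ (l : Fin (L + 1)) (i : Fin n), F l.succ i ≤ F l.castSucc i) ∧
    (∀ (l : Fin (L + 1)) (i j : Fin n) (a : Fin (B i j)),
      Submodule.map (Matrix.mulVecLin (x i j a)) (F l.castSucc i) ≤ F l.succ j) ∧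
    (∀ (l : Fin (L + 1)) (i : Fin n),
      Module.finrank K ↥(F l.castSucc i) = Module.finrank K ↥(F l.succ i) + S l i)

/-- The module `M_x` has a filtration governed by `S`. -/
def GovernedFilt (L : ℕ) (x : RepPt K n B d) (S : Fin (L + 1) → Fin n → ℕ) : Prop :=
  GovernedFiltOn L x (fun _ => ⊤) S

/-- The subrepresentation `W` of `M_x` has radical layering `S`. -/
def HasRadLayeringOn (L : ℕ) (x : RepPt K n B d) (W : ∀ i : Fin n, Submodule K (Fin (d i) → K))
    (S : Fin (L + 1) → Fin n → ℕ) : Prop :=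
  (∀ i : Fin n, radSerIn x W (L + 1) i = ⊥) ∧
  ∀ (l : Fin (L + 1)) (i : Fin n),
    Module.finrank K ↥(radSerIn x W (l : ℕ) i) = ∑ j ∈ Finset.Ici l, S j i

/-- The module `M_x` has radical layering `S`. -/
def HasRadLayering (L : ℕ) (x : RepPt K n B d) (S : Fin (L + 1) → Fin n → ℕ) : Prop :=
  HasRadLayeringOn L x (fun _ => ⊤) S

/-- The dominance order on semisimple sequences. -/
def DomLE {L : ℕ} (S T : Fin (L + 1) → Fin n → ℕ) : Prop :=
  ∀ (l : Fin (L + 1)) (i : Fin n), ∑ j ∈ Finset.Iic l, S j i ≤ ∑ j ∈ Finset.Iic l, T j i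

variable (K) in
/-- Realizability of a semisimple sequence over the truncated path algebra. -/
def Realizable (L : ℕ) (B : Fin n → Fin n → ℕ) (S : Fin (L + 1) → Fin n → ℕ) : Prop :=
  ∃ x : RepPt K n B (fun i => ∑ l, S l i), InRepTrunc L x ∧ HasRadLayering L x S

/-- Realizability of a semisimple sequence over `KQ/I`. -/
def RealizableRel (I : ∀ i j : Fin n, Set (QPath B i j →₀ K)) (L : ℕ)
    (S : Fin (L + 1) → Fin n → ℕ) : Prop :=
  ∃ x : RepPt K n B (fun i => ∑ l, S l i), InRep I x ∧ HasRadLayering L x S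

/-- Coordinates of the affine space of representation points. -/
abbrev CoordIx (n : ℕ) (B : Fin n → Fin n → ℕ) (d : Fin n → ℕ) : Type :=
  Σ i : Fin n, Σ j : Fin n, Fin (B i j) × Fin (d j) × Fin (d i)

def coords (x : RepPt K n B d) : CoordIx n B d → K :=
  fun c => x c.1 c.2.1 c.2.2.1 c.2.2.2.1 c.2.2.2.2

/-- Zariski-closed subsets of the affine space of representation points. -/
def ZClosed (Z : Set (RepPt K n B d)) : Prop :=
  ∃ P : Set (MvPolynomial (CoordIx n B d) K),
    Z = {x | ∀ f ∈ P, MvPolynomial.eval (coords x) f = 0}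

/-- `T` is Zariski-closed in the subvariety `V`. -/
def ZClosedIn (V T : Set (RepPt K n B d)) : Prop :=
  ∃ Z : Set (RepPt K n B d), ZClosed Z ∧ T = V ∩ Z

/-- The Zariski closure of `C` inside `V`. -/
def ZClosureIn (V C : Set (RepPt K n B d)) : Set (RepPt K n B d) :=
  {x | x ∈ V ∧ ∀ Z : Set (RepPt K n B d), ZClosed Z → C ⊆ Z → x ∈ Z}

/-- Irreducibility of a subset in the Zariski topology. -/
def ZIrred (C : Set (RepPt K n B d)) : Prop :=
  C.Nonempty ∧ ∀ Z₁ Z₂ : Set (RepPt K n B d), ZClosed Z₁ → ZClosed Z₂ →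
    C ⊆ Z₁ ∪ Z₂ → C ⊆ Z₁ ∨ C ⊆ Z₂

/-- `C` is an irreducible component (a maximal irreducible subset) of `V`. -/
def IsIrredComponentOf (V C : Set (RepPt K n B d)) : Prop :=
  ZIrred C ∧ C ⊆ V ∧ ∀ C' : Set (RepPt K n B d), ZIrred C' → C' ⊆ V → C ⊆ C' → C' = C

/-- The triangularity conditions (i) and (ii) on a representation point, relative to a
decomposition `C` of the spaces at the vertices. -/
def Triangular (L : ℕ) (x : RepPt K n B d)
    (C : Fin (L + 1) → ∀ i : Fin n, Submodule K (Fin (d i) → K)) : Prop :=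
  ∀ (l : Fin (L + 1)) (i j : Fin n) (a : Fin (B i j)),
    Submodule.map (Matrix.mulVecLin (x i j a)) (C l i) ≤ ⨆ (m : Fin (L + 1)) (_ : l < m), C m j

/-- `C` is a decomposition of `K^d` induced by the semisimple sequence `S`. -/
def IsInducedDecomp (L : ℕ) (d : Fin n → ℕ) (S : Fin (L + 1) → Fin n → ℕ)
    (C : Fin (L + 1) → ∀ i : Fin n, Submodule K (Fin (d i) → K)) : Prop :=
  (∀ i : Fin n, (⨆ l : Fin (L + 1), C l i) = ⊤) ∧
  (∀ (l : Fin (L + 1)) (i : Fin n), Module.finrank K ↥(C l i) = S l i) ∧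
  (∀ i : Fin n, ∑ l : Fin (L + 1), S l i = d i)

end Framework

section StdBlock

variable {K : Type*} [Field K] {n : ℕ}

/-- The standard decomposition of `K^d` induced by the semisimple sequence `S`: at vertex `i`,
the `l`-th block consists of the coordinate functions supported on the coordinates `r` with
`∑_{m < l} S m i ≤ r < ∑_{m ≤ l} S m i`. -/
def stdBlock (L : ℕ) (d : Fin n → ℕ) (S : Fin (L + 1) → Fin n → ℕ) (l : Fin (L + 1))
    (i : Fin n) : Submodule K (Fin (d i) → K) where
  carrier := {v | ∀ r : Fin (d i),
    ((r : ℕ) < ∑ m ∈ Finset.Iio l, S m i ∨ ∑ m ∈ Finset.Iic l, S m i ≤ (r : ℕ)) → v r = 0}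
  add_mem' := by
    intro a b ha hb r hr
    rw [Pi.add_apply, ha r hr, hb r hr, add_zero]
  zero_mem' := fun r _ => rfl
  smul_mem' := by
    intro c v hv r hr
    rw [Pi.smul_apply, hv r hr, smul_zero]

end StdBlock

/-!
A filtration `F` governed by `S` is the same thing as a basis of each `K^{d_i}` indexed by pairs
`(l, j)` with `j < S l i` such that `F l` is spanned by the vectors of the layers `≥ l`: choose
complements of `F (l + 1)` in `F l` and bases of them. The standard basis, ordered in the same
way, spans the standard blocks layer by layer, so the change of basis `g ∈ GL(d)` from it to an
adapted basis makes `g⁻¹ x g` triangular exactly when every arrow of `x` maps `F l` into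
`F (l + 1)`; conjugation preserves the relations of `I`.
-/

open Submodule Module

section LayerSpan

variable {K V W : Type*} [Field K] [AddCommGroup V] [Module K V] [AddCommGroup W] [Module K W]
  {L : ℕ} {s : Fin (L + 1) → ℕ}

variable (K) in
def layerSpan (v : (Σ l : Fin (L + 1), Fin (s l)) → V) (t : Fin (L + 2)) : Submodule K V :=
  span K (v '' {p | t ≤ p.1.castSucc})

lemma image_setOf_fst_eq {X : Type*} (v : (Σ l : Fin (L + 1), Fin (s l)) → X) (l : Fin (L + 1)) :
    v '' {p | p.1 = l} = Set.range fun j => v ⟨l, j⟩ := by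
  ext y
  constructor
  · rintro ⟨⟨m, j⟩, rfl : m = l, rfl⟩
    exact ⟨j, rfl⟩
  · rintro ⟨j, rfl⟩
    exact ⟨⟨l, j⟩, rfl, rfl⟩

lemma layerSpan_eq_iSup (v : (Σ l : Fin (L + 1), Fin (s l)) → V) (t : Fin (L + 2)) :
    layerSpan K v t =
      ⨆ (m : Fin (L + 1)) (_ : t ≤ m.castSucc), span K (Set.range fun j => v ⟨m, j⟩) := by
  rw [layerSpan, ← span_iUnion₂]
  congr 1
  ext y
  simp only [Set.mem_image, Set.mem_ofPred_eq, Set.mem_iUnion, Set.mem_range, Sigma.exists,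
    exists_prop]
  constructor
  · rintro ⟨m, j, hm, rfl⟩
    exact ⟨m, hm, j, rfl⟩
  · rintro ⟨m, hm, j, rfl⟩
    exact ⟨m, j, hm, rfl⟩

lemma layerSpan_succ_eq_iSup (v : (Σ l : Fin (L + 1), Fin (s l)) → V) (l : Fin (L + 1)) :
    layerSpan K v l.succ =
      ⨆ (m : Fin (L + 1)) (_ : l < m), span K (Set.range fun j => v ⟨m, j⟩) := by
  simp only [layerSpan_eq_iSup, Fin.succ_le_castSucc_iff]

lemma layerSpan_castSucc (v : (Σ l : Fin (L + 1), Fin (s l)) → V) (l : Fin (L + 1)) :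
    layerSpan K v l.castSucc = span K (v '' {p | p.1 = l}) ⊔ layerSpan K v l.succ := by
  have hsplit : {p : Σ l : Fin (L + 1), Fin (s l) | l.castSucc ≤ p.1.castSucc} =
      {p | p.1 = l} ∪ {p | l.succ ≤ p.1.castSucc} := by
    ext p
    simp only [Set.mem_ofPred_eq, Set.mem_union, Fin.castSucc_le_castSucc_iff,
      Fin.succ_le_castSucc_iff]
    rw [le_iff_eq_or_lt, eq_comm]
  rw [layerSpan, hsplit, Set.image_union, span_union, layerSpan]

lemma layerSpan_antitone (v : (Σ l : Fin (L + 1), Fin (s l)) → V) : Antitone (layerSpan K v) :=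
  fun _ _ htt' => span_mono (Set.image_mono fun _ hp => le_trans htt' hp)

lemma layerSpan_zero (v : (Σ l : Fin (L + 1), Fin (s l)) → V) :
    layerSpan K v 0 = span K (Set.range v) := by
  rw [layerSpan, ← Set.image_univ]
  congr
  exact Set.eq_univ_of_forall fun p => Fin.zero_le _

lemma layerSpan_last (v : (Σ l : Fin (L + 1), Fin (s l)) → V) :
    layerSpan K v (Fin.last (L + 1)) = ⊥ := by
  rw [layerSpan, span_eq_bot]
  rintro _ ⟨p, hp, -⟩
  exact absurd hp (not_le.2 (Fin.castSucc_lt_last p.1))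

lemma map_layerSpan (f : V →ₗ[K] W) (v : (Σ l : Fin (L + 1), Fin (s l)) → V) (t : Fin (L + 2)) :
    (layerSpan K v t).map f = layerSpan K (f ∘ v) t := by
  rw [layerSpan, layerSpan, map_span, Set.image_comp]

lemma finrank_layerSpan_castSucc (b : Basis (Σ l : Fin (L + 1), Fin (s l)) K V)
    (l : Fin (L + 1)) :
    finrank K (layerSpan K b l.castSucc) = finrank K (layerSpan K b l.succ) + s l := by
  have : FiniteDimensional K V := b.finiteDimensional_of_finite
  have hdisj : span K (b '' {p | p.1 = l}) ⊓ layerSpan K b l.succ = ⊥ :=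
    disjoint_iff.1 <| b.linearIndependent.disjoint_span_image <| Set.disjoint_left.2
      fun _ hp hp' => (Fin.succ_le_castSucc_iff.1 hp').ne' hp
  have hblock : finrank K (span K (b '' {p | p.1 = l})) = s l := by
    rw [image_setOf_fst_eq, finrank_span_eq_card (b := fun j => b ⟨l, j⟩)
      (b.linearIndependent.comp _ sigma_mk_injective), Fintype.card_fin]
  have := finrank_sup_add_finrank_inf_eq (span K (b '' {p | p.1 = l})) (layerSpan K b l.succ)
  rw [hdisj, finrank_bot, add_zero, hblock] at this
  rw [layerSpan_castSucc, this, add_comm]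

lemma exists_fin_span_sup_eq [FiniteDimensional K V] {U U' : Submodule K V} (h : U ≤ U') {k : ℕ}
    (hk : finrank K U' = finrank K U + k) :
    ∃ c : Fin k → V, span K (Set.range c) ⊔ U = U' := by
  obtain ⟨C, hCompl⟩ := exists_isCompl (⟨U, h⟩ : Set.Iic U')
  have hinf : (C : Submodule K V) ⊓ U = ⊥ := by
    simpa [inf_comm] using congrArg Subtype.val hCompl.inf_eq_bot
  have hsup : (C : Submodule K V) ⊔ U = U' := by
    simpa [sup_comm] using congrArg Subtype.val hCompl.sup_eq_top
  have hC : finrank K C = k := by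
    have := finrank_sup_add_finrank_inf_eq (C : Submodule K V) U
    rw [hsup, hinf, finrank_bot] at this
    omega
  refine ⟨fun j => (C : Submodule K V).subtype (finBasisOfFinrankEq K C hC j), ?_⟩
  rw [Set.range_comp', span_image, (finBasisOfFinrankEq K C hC).span_eq, Submodule.map_top,
    range_subtype, hsup]

end LayerSpan

section AdaptedBasis

variable {K V : Type*} [Field K] [AddCommGroup V] [Module K V] [FiniteDimensional K V]
  {L : ℕ} {s : Fin (L + 1) → ℕ}

theorem exists_basis_layerSpan_eq (hs : ∑ l, s l = finrank K V)
    (F : Fin (L + 2) → Submodule K V) (h0 : F 0 = ⊤) (hlast : F (Fin.last (L + 1)) = ⊥)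
    (hanti : ∀ l : Fin (L + 1), F l.succ ≤ F l.castSucc)
    (hdim : ∀ l : Fin (L + 1), finrank K (F l.castSucc) = finrank K (F l.succ) + s l) :
    ∃ b : Basis (Σ l : Fin (L + 1), Fin (s l)) K V, ∀ t, layerSpan K b t = F t := by
  choose c hc using fun l => exists_fin_span_sup_eq (hanti l) (hdim l)
  let v : (Σ l : Fin (L + 1), Fin (s l)) → V := fun p => c p.1 p.2
  have hv : ∀ t, layerSpan K v t = F t := by
    refine Fin.reverseInduction ?_ fun l ih => ?_
    · rw [layerSpan_last, hlast]
    · rw [layerSpan_castSucc, image_setOf_fst_eq, ih, hc]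
  have hspan : ⊤ ≤ span K (Set.range v) := by
    rw [← layerSpan_zero, hv, h0]
  refine ⟨basisOfTopLeSpanOfCardEqFinrank v hspan (by simp [hs]), fun t => ?_⟩
  rw [coe_basisOfTopLeSpanOfCardEqFinrank, hv]

end AdaptedBasis

section Conjugation

variable {K : Type*} [Field K] {n : ℕ} {B : Fin n → Fin n → ℕ} {d : Fin n → ℕ}

def glConj (g : ∀ i, GL (Fin (d i)) K) (x : RepPt K n B d) : RepPt K n B d :=
  fun i j a => (g j).val * x i j a * ((g i)⁻¹).val

lemma glConj_glConj_inv (g : ∀ i, GL (Fin (d i)) K) (x : RepPt K n B d) :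
    glConj g (glConj (fun i => (g i)⁻¹) x) = x := by
  funext i j a
  simp only [glConj, inv_inv, Matrix.mul_assoc, Units.mul_inv, Matrix.mul_one]
  rw [← Matrix.mul_assoc, Units.mul_inv, Matrix.one_mul]

lemma evalPath_glConj (g : ∀ i, GL (Fin (d i)) K) (x : RepPt K n B d) {i j : Fin n}
    (p : QPath B i j) : evalPath (glConj g x) p = (g j).val * evalPath x p * ((g i)⁻¹).val := by
  induction p with
  | nil => simp [evalPath]
  | cons p a ih =>
    simp only [evalPath, ih, glConj, Matrix.mul_assoc]
    rw [← Matrix.mul_assoc _ (g _).val, Units.inv_mul, Matrix.one_mul]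

lemma evalRel_glConj (g : ∀ i, GL (Fin (d i)) K) (x : RepPt K n B d) {i j : Fin n}
    (r : QPath B i j →₀ K) : evalRel (glConj g x) r = (g j).val * evalRel x r * ((g i)⁻¹).val := by
  simp only [evalRel, Finsupp.sum, evalPath_glConj, Matrix.mul_sum, Matrix.sum_mul,
    Matrix.mul_smul, Matrix.smul_mul]

lemma InRep.glConj {I : ∀ i j : Fin n, Set (QPath B i j →₀ K)} {x : RepPt K n B d}
    (hx : InRep I x) (g : ∀ i, GL (Fin (d i)) K) : InRep I (glConj g x) := by
  intro i j r hr
  rw [evalRel_glConj, hx i j r hr, Matrix.mul_zero, Matrix.zero_mul]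

def glEquiv {m : ℕ} : GL (Fin m) K ≃* ((Fin m → K) ≃ₗ[K] (Fin m → K)) :=
  Matrix.GeneralLinearGroup.toLin.trans (LinearMap.GeneralLinearGroup.generalLinearEquiv K _)

lemma toLinearMap_glEquiv {m : ℕ} (g : GL (Fin m) K) :
    (glEquiv g).toLinearMap = Matrix.mulVecLin g.val :=
  rfl

lemma map_glConj_le_map_iff (g : ∀ i, GL (Fin (d i)) K) (x : RepPt K n B d) {i j : Fin n}
    (a : Fin (B i j)) (T : Submodule K (Fin (d i) → K)) (T' : Submodule K (Fin (d j) → K)) :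
    (T.map (glEquiv (g i)).toLinearMap).map (Matrix.mulVecLin (glConj g x i j a)) ≤
        T'.map (glEquiv (g j)).toLinearMap ↔
      T.map (Matrix.mulVecLin (x i j a)) ≤ T' := by
  have hcomm : glConj g x i j a * (g i).val = (g j).val * x i j a := by
    rw [glConj, Matrix.mul_assoc, Units.inv_mul, Matrix.mul_one]
  rw [toLinearMap_glEquiv, ← map_comp, ← Matrix.mulVecLin_mul, hcomm, Matrix.mulVecLin_mul,
    map_comp, ← toLinearMap_glEquiv, map_le_map_iff_of_injective (glEquiv (g j)).injective]

end Conjugation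

section StandardBasis

variable {K : Type*} [Field K]

lemma val_finSigmaFinEquiv {m : ℕ} {s : Fin m → ℕ} (p : Σ l : Fin m, Fin (s l)) :
    (finSigmaFinEquiv p : ℕ) = ∑ l ∈ Finset.Iio p.1, s l + p.2 := by
  have h : Finset.Iio p.1 = Finset.univ.map (Fin.castLEEmb p.1.2.le) := by
    ext i
    simp only [Finset.mem_Iio, Finset.mem_map, Finset.mem_univ, true_and, Fin.castLEEmb_apply]
    exact ⟨fun hi => ⟨⟨i, hi⟩, rfl⟩, by rintro ⟨j, rfl⟩; exact j.2⟩
  rw [finSigmaFinEquiv_apply, h, Finset.sum_map]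
  rfl

lemma finSigmaFinEquiv_mem_Ico_iff {m : ℕ} {s : Fin m → ℕ} (p : Σ l : Fin m, Fin (s l))
    (l : Fin m) :
    (finSigmaFinEquiv p : ℕ) ∈ Set.Ico (∑ k ∈ Finset.Iio l, s k) (∑ k ∈ Finset.Iic l, s k) ↔
      p.1 = l := by
  have hIic : ∀ k, ∑ i ∈ Finset.Iic k, s i = ∑ i ∈ Finset.Iio k, s i + s k := fun k => by
    rw [← Finset.Iio_insert, Finset.sum_insert Finset.notMem_Iio_self, add_comm]
  have hIic_le : ∀ {k k'}, k < k' → ∑ i ∈ Finset.Iic k, s i ≤ ∑ i ∈ Finset.Iio k', s i :=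
    fun hk => Finset.sum_le_sum_of_subset fun i hi =>
      Finset.mem_Iio.2 ((Finset.mem_Iic.1 hi).trans_lt hk)
  obtain ⟨m', j⟩ := p
  have hj := j.2
  rw [val_finSigmaFinEquiv, Set.mem_Ico]
  rcases lt_trichotomy m' l with h | rfl | h
  · have := hIic_le h
    rw [hIic] at this
    simp only [h.ne, iff_false]
    omega
  · rw [hIic]
    simp only [iff_true]
    omega
  · have := hIic_le h
    simp only [h.ne', iff_false]
    omega

/-- `stdLayerBasis h ⟨l, j⟩` is the unit vector `e r` with `r = ∑ m < l, s m + j`. -/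
noncomputable def stdLayerBasis {N m : ℕ} {s : Fin m → ℕ} (h : ∑ l, s l = N) :
    Basis (Σ l : Fin m, Fin (s l)) K (Fin N → K) :=
  (Pi.basisFun K (Fin N)).reindex (finSigmaFinEquiv.trans (finCongr h)).symm

lemma stdBlock_eq_span {n L : ℕ} {d : Fin n → ℕ} {S : Fin (L + 1) → Fin n → ℕ} {i : Fin n}
    (hS : ∑ l, S l i = d i) (l : Fin (L + 1)) :
    stdBlock L d S l i = span K (Set.range fun j => stdLayerBasis (K := K) hS ⟨l, j⟩) := by
  ext v
  rw [← image_setOf_fst_eq (stdLayerBasis hS), Basis.mem_span_image]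
  simp only [Set.subset_def, Finset.mem_coe, Finsupp.mem_support_iff, Set.mem_ofPred_eq,
    stdLayerBasis, Basis.repr_reindex_apply, Equiv.symm_symm, Pi.basisFun_repr]
  change (∀ r : Fin (d i), _ → v r = 0) ↔ _
  rw [← (finSigmaFinEquiv.trans (finCongr hS)).forall_congr_right]
  refine forall_congr' fun p => ?_
  rw [← finSigmaFinEquiv_mem_Ico_iff p l, Set.mem_Ico, Equiv.trans_apply, finCongr_apply,
    Fin.val_cast, not_imp_comm, not_and_or, not_le, not_lt]

end StandardBasis

section LowersLayers

variable {K : Type*} [Field K] {n : ℕ} {B : Fin n → Fin n → ℕ} {d : Fin n → ℕ} {L : ℕ}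
  {S : Fin (L + 1) → Fin n → ℕ}

def LowersLayers (x : RepPt K n B d)
    (v : ∀ i, (Σ l : Fin (L + 1), Fin (S l i)) → (Fin (d i) → K)) : Prop :=
  ∀ (l : Fin (L + 1)) (i j : Fin n) (a : Fin (B i j)),
    (layerSpan K (v i) l.castSucc).map (Matrix.mulVecLin (x i j a)) ≤ layerSpan K (v j) l.succ

theorem triangular_iff_lowersLayers (x : RepPt K n B d)
    (v : ∀ i, (Σ l : Fin (L + 1), Fin (S l i)) → (Fin (d i) → K)) :
    Triangular L x (fun l i => span K (Set.range fun j => v i ⟨l, j⟩)) ↔ LowersLayers x v := by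
  simp only [Triangular, ← layerSpan_succ_eq_iSup]
  constructor
  · intro h l i j a
    rw [layerSpan_eq_iSup, Submodule.map_iSup]
    refine iSup_le fun m => ?_
    rw [Submodule.map_iSup]
    refine iSup_le fun hm => (h m i j a).trans (layerSpan_antitone _ ?_)
    exact Fin.succ_le_succ_iff.2 (Fin.castSucc_le_castSucc_iff.1 hm)
  · intro h l i j a
    refine le_trans (map_mono ?_) (h l i j a)
    rw [layerSpan_eq_iSup]
    exact le_iSup₂_of_le l le_rfl le_rfl

theorem lowersLayers_glConj_iff (g : ∀ i, GL (Fin (d i)) K) (x : RepPt K n B d)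
    (v : ∀ i, (Σ l : Fin (L + 1), Fin (S l i)) → (Fin (d i) → K)) :
    LowersLayers (glConj g x) (fun i => glEquiv (g i) ∘ v i) ↔ LowersLayers x v := by
  refine forall₄_congr fun l i j a => ?_
  have h := map_glConj_le_map_iff g x a (layerSpan K (v i) l.castSucc) (layerSpan K (v j) l.succ)
  rwa [map_layerSpan (glEquiv (g i)).toLinearMap, map_layerSpan (glEquiv (g j)).toLinearMap] at h

theorem governedFilt_iff_exists_lowersLayers (hS : ∀ i, ∑ l, S l i = d i) (x : RepPt K n B d) :
    GovernedFilt L x S ↔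
      ∃ b : ∀ i, Basis (Σ l : Fin (L + 1), Fin (S l i)) K (Fin (d i) → K),
        LowersLayers x fun i => b i := by
  constructor
  · rintro ⟨F, h0, hlast, hanti, harrow, hdim⟩
    choose b hb using fun i => exists_basis_layerSpan_eq (by rw [hS, finrank_fin_fun])
      (F · i) (h0 i) (hlast i) (hanti · i) (hdim · i)
    exact ⟨b, fun l i j a => by rw [hb, hb]; exact harrow l i j a⟩
  · rintro ⟨b, hb⟩
    exact ⟨fun t i => layerSpan K (b i) t, fun i => (layerSpan_zero _).trans (b i).span_eq,
      fun i => layerSpan_last _, fun l i => layerSpan_antitone _ (Fin.castSucc_le_succ l), hb,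
      fun l i => finrank_layerSpan_castSucc _ _⟩

theorem triangular_stdBlock_iff (hS : ∀ i, ∑ l, S l i = d i) (x : RepPt K n B d) :
    Triangular L x (stdBlock L d S) ↔ LowersLayers x fun i => stdLayerBasis (K := K) (hS i) := by
  rw [← triangular_iff_lowersLayers]
  exact Iff.of_eq (congrArg _ (funext₂ fun l i => stdBlock_eq_span (hS i) l))

end LowersLayers

theorem gl_hull_of_triangular_iff_governed_general
    {K : Type*} [Field K] {n : ℕ} (L : ℕ) (B : Fin n → Fin n → ℕ) (d : Fin n → ℕ)
    (S : Fin (L + 1) → Fin n → ℕ) (hS : ∀ i, ∑ l, S l i = d i)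
    (I : ∀ i j : Fin n, Set (QPath B i j →₀ K))
    (x : RepPt K n B d) (hx : InRep I x) :
    (∃ (x' : RepPt K n B d) (g : ∀ i : Fin n, GL (Fin (d i)) K),
        InRep I x' ∧ Triangular L x' (stdBlock L d S) ∧
        x = fun i j a => (g j).val * x' i j a * ((g i)⁻¹).val) ↔
      GovernedFilt L x S := by
  rw [governedFilt_iff_exists_lowersLayers hS]
  constructor
  · rintro ⟨x', g, -, htri, rfl⟩
    refine ⟨fun i => (stdLayerBasis (hS i)).map (glEquiv (g i)), ?_⟩
    simp only [Basis.coe_map]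
    exact (lowersLayers_glConj_iff g x' _).2 ((triangular_stdBlock_iff hS x').1 htri)
  · rintro ⟨b, hb⟩
    let g i := glEquiv.symm ((stdLayerBasis (hS i)).equiv (b i) (Equiv.refl _))
    have hb_eq : (fun i => ⇑(b i)) = fun i => glEquiv (g i) ∘ stdLayerBasis (hS i) := by
      funext i
      rw [← Basis.coe_map, MulEquiv.apply_symm_apply, Basis.map_equiv, Equiv.refl_symm,
        Basis.reindex_refl]
    refine ⟨glConj (fun i => (g i)⁻¹) x, g, hx.glConj _, ?_, (glConj_glConj_inv g x).symm⟩
    rw [triangular_stdBlock_iff hS, ← lowersLayers_glConj_iff g, glConj_glConj_inv, ← hb_eq]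
    exact hb

/-- A `Λ`-module `M_x` with dimension vector `d` lies in the `GL(d)`-stable
hull of the triangular variety `Rep^tri(≥ S)` (the points of the representation variety of
`Λ = KQ/I` that are strictly lower-triangular with respect to the standard decomposition of
`K^d` induced by `S`) if and only if `M_x` admits a filtration governed by `S`. -/
theorem gl_hull_of_triangular_iff_governed
    {K : Type*} [Field K] {n : ℕ} (L : ℕ) (B : Fin n → Fin n → ℕ) (d : Fin n → ℕ)
    (S : Fin (L + 1) → Fin n → ℕ) (hS : ∀ i, ∑ l, S l i = d i)
    (I : ∀ i j : Fin n, Set (QPath B i j →₀ K))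
    (hlong : ∀ (i j : Fin n) (p : QPath B i j), L + 1 ≤ QPath.length p →
      Finsupp.single p (1 : K) ∈ I i j)
    (x : RepPt K n B d) (hx : InRep I x) :
    (∃ (x' : RepPt K n B d) (g : ∀ i : Fin n, GL (Fin (d i)) K),
        InRep I x' ∧ Triangular L x' (stdBlock L d S) ∧
        x = fun i j a => (g j).val * x' i j a * ((g i)⁻¹).val) ↔
      GovernedFilt L x S :=
  gl_hull_of_triangular_iff_governed_general L B d S hS I x hx
end

section
/- For a truncated path algebra Λ = KQ/⟨paths of length L+1⟩, the variety Rep^{tri}(≥S) coincides with the set of all tuples (f_α) satisfying only the block-triangularity conditions (i) and (ii) (relative to a decomposition of K^d induced by S), i.e., condition (iii) on relations is automatic; consequently Rep^{tri}(≥S) is isomorphic to a full affine space. -/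
open Matrix

private lemma triangular_path_aux {K : Type*} [Field K] {n : ℕ} {L : ℕ}
    {B : Fin n → Fin n → ℕ} {d : Fin n → ℕ}
    {C : Fin (L + 1) → ∀ i : Fin n, Submodule K (Fin (d i) → K)}
    {x : RepPt K n B d} (hx : Triangular L x C) :
    ∀ {i j : Fin n} (p : QPath B i j) (l : Fin (L + 1)),
      Submodule.map (Matrix.mulVecLin (evalPath x p)) (C l i) ≤
        ⨆ (m : Fin (L + 1)) (_ : (l : ℕ) + p.length ≤ (m : ℕ)), C m j := by
  intro i j p
  induction p with
  | nil =>
    intro l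
    simp only [evalPath, QPath.length, Matrix.mulVecLin_one, Submodule.map_id, Nat.add_zero]
    exact le_iSup_of_le l (le_iSup_of_le le_rfl le_rfl)
  | cons p a ih =>
    intro l
    rw [evalPath, Matrix.mulVecLin_mul, Submodule.map_comp]
    refine le_trans (Submodule.map_mono (ih l)) ?_
    rw [Submodule.map_iSup]
    refine iSup_le fun m => ?_
    rw [Submodule.map_iSup]
    refine iSup_le fun hm => ?_
    refine le_trans (hx m _ _ a) ?_
    refine iSup_le fun m' => iSup_le fun hm' => ?_
    refine le_iSup_of_le m' (le_iSup_of_le ?_ le_rfl)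
    simp only [QPath.length]
    omega

/-- For a truncated path algebra `Λ = KQ/⟨paths of length L+1⟩`, the variety
`Rep^tri(≥ S)` coincides with the set of all tuples satisfying only the block-triangularity
conditions (i) and (ii) relative to a decomposition of `K^d` induced by `S`: the relations
(every path of length `L+1` acts by zero) are automatic for triangular tuples.  Consequently
`Rep^tri(≥ S)` is a linear subspace of the space of representation points, i.e. a full affine
space. -/
theorem truncated_triangular_is_affine_space
    {K : Type*} [Field K] {n : ℕ} (L : ℕ) (B : Fin n → Fin n → ℕ) (d : Fin n → ℕ)
    (S : Fin (L + 1) → Fin n → ℕ)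
    (C : Fin (L + 1) → ∀ i : Fin n, Submodule K (Fin (d i) → K))
    (hdec : IsInducedDecomp L d S C) :
    (∀ x : RepPt K n B d, Triangular L x C → InRepTrunc L x) ∧
    (∃ V : Submodule K (RepPt K n B d),
      (V : Set (RepPt K n B d)) = {x : RepPt K n B d | Triangular L x C}) := by
  obtain ⟨htop, _, _⟩ := hdec
  constructor
  · intro x hx i j p hp
    have h := triangular_path_aux hx p
    have hb : ∀ l : Fin (L + 1),
        Submodule.map (Matrix.mulVecLin (evalPath x p)) (C l i) = ⊥ := by
      intro l
      refine le_bot_iff.mp (le_trans (h l) ?_)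
      refine iSup_le fun m => iSup_le fun hm => ?_
      exfalso
      have := m.is_lt
      omega
    have hker : (⊤ : Submodule K (Fin (d i) → K)) ≤
        LinearMap.ker (Matrix.mulVecLin (evalPath x p)) := by
      rw [← htop i]
      refine iSup_le fun l => ?_
      intro v hv
      have : Matrix.mulVecLin (evalPath x p) v ∈
          Submodule.map (Matrix.mulVecLin (evalPath x p)) (C l i) :=
        ⟨v, hv, rfl⟩
      rw [hb l] at this
      exact this
    have hzero : Matrix.mulVecLin (evalPath x p) = 0 :=
      LinearMap.ker_eq_top.mp (top_unique hker)
    ext r c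
    have := congrArg (fun f => f (Pi.single c 1) r) hzero
    simpa [Matrix.mulVecLin_apply, Matrix.mulVec_single] using this
  · refine ⟨⟨⟨⟨{x : RepPt K n B d | Triangular L x C}, ?_⟩, ?_⟩, ?_⟩, rfl⟩
    · intro x y hx hy l i j a
      rw [Submodule.map_le_iff_le_comap]
      intro v hv
      have h1 := hx l i j a ⟨v, hv, rfl⟩
      have h2 := hy l i j a ⟨v, hv, rfl⟩
      have : Matrix.mulVecLin ((x + y) i j a) v =
          Matrix.mulVecLin (x i j a) v + Matrix.mulVecLin (y i j a) v := by
        show Matrix.mulVecLin (x i j a + y i j a) v = _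
        rw [Matrix.mulVecLin_add]; rfl
      simpa [Submodule.mem_comap, this] using add_mem h1 h2
    · intro l i j a
      rw [Submodule.map_le_iff_le_comap]
      intro v hv
      have : Matrix.mulVecLin ((0 : RepPt K n B d) i j a) v = 0 := by
        show Matrix.mulVecLin (0 : Matrix _ _ K) v = 0
        simp
      simp [Submodule.mem_comap, this]
    · intro c x hx l i j a
      rw [Submodule.map_le_iff_le_comap]
      intro v hv
      have h1 := hx l i j a ⟨v, hv, rfl⟩
      have : Matrix.mulVecLin ((c • x) i j a) v = c • Matrix.mulVecLin (x i j a) v := by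
        show Matrix.mulVecLin (c • x i j a) v = _
        simp [Matrix.mulVecLin_apply, Matrix.smul_mulVec]
      exact Submodule.mem_comap.mpr (this ▸ Submodule.smul_mem _ c h1)
end
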